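/- arXiv:2412.11709 — 2 statements merged into one kernel-verified Lean document; each statement's English description precedes it below -/
import Mathlib

section
/- (Necessary condition for Fučík curves at the diagonal.) Let A be an n×n real matrix with real eigenvalue λ. Suppose (εₙ, ηₙ, uₙ) is a sequence in ℝ × ℝ × ℝ^n with εₙ ≠ 0, ‖uₙ‖ = 1, (A - λI)uₙ = εₙ(|uₙ| + ηₙuₙ) for all n, and (εₙ, ηₙ, uₙ) → (0, η₀, u₀). Then u₀ ∈ ker(A - λI), u₀ ≠ 0, and for every v ∈ ker(Aᵀ - λI) one has ⟨|u₀| + η₀u₀, v⟩ = 0. -/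
open Matrix
open scoped RealInnerProductSpace

/-- Necessary condition for Fučík curves at the diagonal. -/
theorem stmt_4 (n : ℕ) (A : Matrix (Fin n) (Fin n) ℝ) (lam : ℝ)
    (hlam : ∃ w : Fin n → ℝ, w ≠ 0 ∧ A.mulVec w = lam • w)
    (ε η : ℕ → ℝ) (u : ℕ → EuclideanSpace ℝ (Fin n))
    (η₀ : ℝ) (u₀ : EuclideanSpace ℝ (Fin n))
    (hε : ∀ k, ε k ≠ 0) (hnorm : ∀ k, ‖u k‖ = 1)
    (heq : ∀ k, (A - lam • 1).mulVec (u k)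
        = ε k • (fun i => |u k i| + η k * u k i))
    (hεlim : Filter.Tendsto ε Filter.atTop (nhds 0))
    (hηlim : Filter.Tendsto η Filter.atTop (nhds η₀))
    (hulim : Filter.Tendsto u Filter.atTop (nhds u₀)) :
    (A - lam • 1).mulVec u₀ = 0 ∧ u₀ ≠ 0 ∧
      ∀ v : EuclideanSpace ℝ (Fin n), (Aᵀ - lam • 1).mulVec v = 0 →
        ⟪(show EuclideanSpace ℝ (Fin n) from WithLp.toLp 2 (fun i => |u₀ i| + η₀ * u₀ i)), v⟫ = 0 := by
  have hcomp : ∀ i, Filter.Tendsto (fun k => u k i) Filter.atTop (nhds (u₀ i)) :=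
    fun i => ((EuclideanSpace.proj i).continuous.tendsto u₀).comp hulim
  -- componentwise limit of the "nonlinearity"
  have habs : ∀ i, Filter.Tendsto (fun k => |u k i| + η k * u k i) Filter.atTop
      (nhds (|u₀ i| + η₀ * u₀ i)) :=
    fun i => ((hcomp i).abs.add (hηlim.mul (hcomp i)))
  have h1 : (A - lam • 1).mulVec u₀ = 0 := by
    funext i
    have hA : Filter.Tendsto (fun k => ((A - lam • 1).mulVec (u k)) i) Filter.atTop
        (nhds (((A - lam • 1).mulVec u₀) i)) := by
      simp only [Matrix.mulVec, dotProduct]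
      exact tendsto_finset_sum _ fun j _ => (hcomp j).const_mul _
    have hB : Filter.Tendsto (fun k => ((A - lam • 1).mulVec (u k)) i) Filter.atTop
        (nhds 0) := by
      have : ∀ k, ((A - lam • 1).mulVec (u k)) i = ε k * (|u k i| + η k * u k i) := by
        intro k; rw [heq k]; rfl
      simp only [this]
      have := hεlim.mul (habs i)
      simpa using this
    exact tendsto_nhds_unique hA hB
  have hnorm0 : ‖u₀‖ = 1 := by
    have : Filter.Tendsto (fun k => ‖u k‖) Filter.atTop (nhds ‖u₀‖) :=
      (continuous_norm.tendsto u₀).comp hulim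
    have h2 : Filter.Tendsto (fun k => ‖u k‖) Filter.atTop (nhds 1) := by
      simp only [hnorm]; exact tendsto_const_nhds
    exact tendsto_nhds_unique this h2
  refine ⟨h1, fun h => by simp [h] at hnorm0, ?_⟩
  intro v hv
  have key : ∀ k, (fun i => |u k i| + η k * u k i) ⬝ᵥ (v : Fin n → ℝ) = 0 := by
    intro k
    have h3 : ((A - lam • 1).mulVec (u k)) ⬝ᵥ (v : Fin n → ℝ)
        = (u k : Fin n → ℝ) ⬝ᵥ ((Aᵀ - lam • 1).mulVec v) := by
      rw [dotProduct_comm, Matrix.dotProduct_mulVec, ← Matrix.mulVec_transpose]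
      rw [Matrix.transpose_sub, Matrix.transpose_smul, Matrix.transpose_one,
        dotProduct_comm]
    rw [heq k, hv] at h3
    simp only [dotProduct_zero, smul_dotProduct, smul_eq_mul] at h3
    exact (mul_eq_zero.mp h3).resolve_left (hε k)
  have hlim : Filter.Tendsto (fun k => (fun i => |u k i| + η k * u k i) ⬝ᵥ (v : Fin n → ℝ))
      Filter.atTop (nhds ((fun i => |u₀ i| + η₀ * u₀ i) ⬝ᵥ (v : Fin n → ℝ))) := by
    simp only [dotProduct]
    exact tendsto_finset_sum _ fun i _ => (habs i).mul_const _
  have h4 : (fun i => |u₀ i| + η₀ * u₀ i) ⬝ᵥ (v : Fin n → ℝ) = 0 := by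
    have : Filter.Tendsto (fun k => (fun i => |u k i| + η k * u k i) ⬝ᵥ (v : Fin n → ℝ))
        Filter.atTop (nhds 0) := by simp only [key]; exact tendsto_const_nhds
    exact tendsto_nhds_unique hlim this
  simpa [PiLp.inner_apply, dotProduct, RCLike.inner_apply, mul_comm] using h4
end

section
/- Let A be an n×n real matrix with real eigenvalue λ. Suppose (α(t), β(t), u(t)) is a continuous curve on an interval I containing 0 such that Au(t) = α(t)u(t)⁺ - β(t)u(t)⁻ with ‖u(t)‖ = 1, α and β are differentiable at 0, α(t) ≠ β(t) for t ≠ 0, and (α(0), β(0)) = (λ, λ). Then u(0) ∈ ker(A - λI), u(0) ≠ 0, and for every v ∈ ker(Aᵀ - λI): α'(0)⟨u(0)⁺, v⟩ = β'(0)⟨u(0)⁻, v⟩. -/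
open Matrix
open scoped RealInnerProductSpace

/-- A continuous Fučík curve through the diagonal point `(λ, λ)`. -/
theorem stmt_5 (n : ℕ) (A : Matrix (Fin n) (Fin n) ℝ) (lam : ℝ)
    (hlam : ∃ w : Fin n → ℝ, w ≠ 0 ∧ A.mulVec w = lam • w)
    (I : Set ℝ) (hI : I ∈ nhds (0 : ℝ))
    (α β : ℝ → ℝ) (u : ℝ → EuclideanSpace ℝ (Fin n))
    (hαc : ContinuousOn α I) (hβc : ContinuousOn β I) (huc : ContinuousOn u I)
    (a b : ℝ) (hα' : HasDerivAt α a 0) (hβ' : HasDerivAt β b 0)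
    (heq : ∀ t ∈ I, A.mulVec (u t)
        = α t • (fun i => max (u t i) 0) - β t • (fun i => max (-u t i) 0))
    (hnorm : ∀ t ∈ I, ‖u t‖ = 1)
    (hne : ∀ t ∈ I, t ≠ 0 → α t ≠ β t)
    (h0 : α 0 = lam ∧ β 0 = lam) :
    (A - lam • 1).mulVec (u 0) = 0 ∧ u 0 ≠ 0 ∧
      ∀ v : EuclideanSpace ℝ (Fin n), (Aᵀ - lam • 1).mulVec v = 0 →
        a * ⟪(show EuclideanSpace ℝ (Fin n) from WithLp.toLp 2 (fun i => max (u 0 i) 0)), v⟫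
          = b * ⟪(show EuclideanSpace ℝ (Fin n) from WithLp.toLp 2 (fun i => max (-u 0 i) 0)), v⟫ := by
  have h0I : (0 : ℝ) ∈ I := mem_of_mem_nhds hI
  have hpm : ∀ t, (fun i => max (u t i) 0) - (fun i => max (-u t i) 0) = (u t : Fin n → ℝ) := by
    intro t
    funext i
    simp only [Pi.sub_apply]
    rcases le_total (u t i) 0 with h | h
    · rw [max_eq_right h, max_eq_left (by linarith)]; ring
    · rw [max_eq_left h, max_eq_right (by linarith)]; ring
  -- Part 1
  have heq0 : A.mulVec (u 0) = lam • (u 0 : Fin n → ℝ) := by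
    have := heq 0 h0I
    rw [h0.1, h0.2, ← smul_sub, hpm 0] at this
    exact this
  have part1 : (A - lam • 1).mulVec (u 0) = 0 := by
    rw [Matrix.sub_mulVec, heq0, Matrix.smul_mulVec, Matrix.one_mulVec, sub_self]
  have part2 : u 0 ≠ 0 := by
    intro h
    have := hnorm 0 h0I
    rw [h, norm_zero] at this
    norm_num at this
  refine ⟨part1, part2, ?_⟩
  intro v hv
  have hv' : Aᵀ.mulVec v = lam • (v : Fin n → ℝ) := by
    have := hv
    rw [Matrix.sub_mulVec, sub_eq_zero, Matrix.smul_mulVec, Matrix.one_mulVec] at this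
    exact this
  set F : ℝ → ℝ := fun t => (fun i => max (u t i) 0) ⬝ᵥ (v : Fin n → ℝ) with hF
  set G : ℝ → ℝ := fun t => (fun i => max (-u t i) 0) ⬝ᵥ (v : Fin n → ℝ) with hG
  have key : ∀ t ∈ I, (α t - lam) * F t = (β t - lam) * G t := by
    intro t ht
    have h1 : A.mulVec (u t) ⬝ᵥ (v : Fin n → ℝ) = lam * ((u t : Fin n → ℝ) ⬝ᵥ v) := by
      rw [dotProduct_comm, dotProduct_mulVec, ← Matrix.mulVec_transpose,
        dotProduct_comm, hv', dotProduct_smul, smul_eq_mul]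
    have h2 : A.mulVec (u t) ⬝ᵥ (v : Fin n → ℝ) = α t * F t - β t * G t := by
      rw [heq t ht, sub_dotProduct, smul_dotProduct, smul_dotProduct,
        smul_eq_mul, smul_eq_mul]
    have h3 : (u t : Fin n → ℝ) ⬝ᵥ v = F t - G t := by
      rw [← hpm t, sub_dotProduct]
    rw [h2, h3] at h1
    ring_nf
    ring_nf at h1
    linarith
  -- continuity of F and G at 0
  have huc0 : ContinuousAt u 0 := huc.continuousAt hI
  have hui : ∀ i : Fin n, ContinuousAt (fun t => u t i) 0 := fun i =>
    (by fun_prop : Continuous (fun x : EuclideanSpace ℝ (Fin n) => x i)).continuousAt.comp huc0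
  have hFc : ContinuousAt F 0 := by
    simp only [hF, dotProduct]
    exact tendsto_finset_sum _ fun i _ => (((hui i).max continuousAt_const).mul continuousAt_const)
  have hGc : ContinuousAt G 0 := by
    simp only [hG, dotProduct]
    exact tendsto_finset_sum _ fun i _ => ((((hui i).neg).max continuousAt_const).mul continuousAt_const)
  have hαs : Filter.Tendsto (fun t => (α t - lam) / t * F t) (nhdsWithin 0 {(0:ℝ)}ᶜ)
      (nhds (a * F 0)) := by
    have h1 : Filter.Tendsto (slope α 0) (nhdsWithin 0 {(0:ℝ)}ᶜ) (nhds a) :=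
      hasDerivAt_iff_tendsto_slope.mp hα'
    have h2 := h1.mul (hFc.continuousWithinAt.tendsto)
    refine h2.congr (fun t => ?_)
    simp [slope, h0.1, div_eq_inv_mul]
  have hβs : Filter.Tendsto (fun t => (β t - lam) / t * G t) (nhdsWithin 0 {(0:ℝ)}ᶜ)
      (nhds (b * G 0)) := by
    have h1 : Filter.Tendsto (slope β 0) (nhdsWithin 0 {(0:ℝ)}ᶜ) (nhds b) :=
      hasDerivAt_iff_tendsto_slope.mp hβ'
    have h2 := h1.mul (hGc.continuousWithinAt.tendsto)
    refine h2.congr (fun t => ?_)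
    simp [slope, h0.2, div_eq_inv_mul]
  have hEv : ∀ᶠ t in nhdsWithin 0 {(0:ℝ)}ᶜ,
      (α t - lam) / t * F t = (β t - lam) / t * G t := by
    filter_upwards [nhdsWithin_le_nhds hI, self_mem_nhdsWithin] with t ht ht0
    have := key t ht
    rw [div_mul_eq_mul_div, div_mul_eq_mul_div, this]
  have : a * F 0 = b * G 0 := tendsto_nhds_unique (hαs.congr' (hEv.mono fun t h => h)) hβs
  have hinner : ∀ x : EuclideanSpace ℝ (Fin n), ⟪x, v⟫ = (x : Fin n → ℝ) ⬝ᵥ v := by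
    intro x
    simp [PiLp.inner_apply, RCLike.inner_apply, dotProduct, mul_comm]
  rw [hinner, hinner]
  exact this
end
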